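/- For every τ ∈ {0,1}^ℕ and every finite word w = w_0 w_1 ⋯ w_{ℓ−1} over {1,3}, the unique S-invariant probability measure μ_τ on X_τ satisfies μ_τ([w⃖]) = μ_τ([w]), where w⃖ = w_{ℓ−1} ⋯ w_1 w_0 is the reversal of w. -/

import Mathlib

open MeasureTheory Filter Topology
open scoped ENNReal

attribute [local instance] Classical.propDecidable

noncomputable section

/-- The shift map on bi-infinite sequences: `(S x) n = x (n+1)`. -/
def shift {α : Type*} (x : ℤ → α) : ℤ → α := fun n => x (n + 1)

/-- Shift by an arbitrary integer amount `m`. -/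
def shiftZ {α : Type*} (m : ℤ) (x : ℤ → α) : ℤ → α := fun n => x (n + m)

/-- A run structure on a bi-infinite sequence `x`: `t k` is the starting index of the
`k`-th maximal mono-symbol block of `x`, indexed so that block `0` contains position `0`. -/
structure RunStructure (x : ℤ → ℕ) where
  t : ℤ → ℤ
  mono : StrictMono t
  start_nonpos : t 0 ≤ 0
  start_pos : 0 < t 1
  const : ∀ k i : ℤ, t k ≤ i → i < t (k + 1) → x i = x (t k)
  alt : ∀ k : ℤ, x (t (k + 1)) ≠ x (t k)

/-- `d` is the run-length derivative of `x`: `d k` is the length of the `k`-th run. -/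
def IsDelta (x d : ℤ → ℕ) : Prop :=
  ∃ r : RunStructure x, ∀ k : ℤ, (d k : ℤ) = r.t (k + 1) - r.t k

/-- The run-length derivative operator `Δ` (junk value when no derivative exists). -/
def delta (x : ℤ → ℕ) : ℤ → ℕ :=
  if h : ∃ d, IsDelta x d then h.choose else fun _ => 0

/-- A bi-infinite sequence is smooth over `{1,3}` if all its iterated derivatives exist
and take values in `{1,3}`. -/
def SmoothSeq (x : ℤ → ℕ) : Prop :=
  ∀ k : ℕ, ∀ n : ℤ, delta^[k] x n = 1 ∨ delta^[k] x n = 3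

/-- The set `X` of bi-infinite smooth sequences over `{1,3}`. -/
def SmoothX : Set (ℤ → ℕ) := {x | SmoothSeq x}

/-- The recoding alphabet: `A = 1`, `B = 3`, `C = 111`, `D = 333`. -/
inductive ABCD : Type
  | A | B | C | D
deriving DecidableEq

instance : TopologicalSpace ABCD := ⊥
instance : DiscreteTopology ABCD := ⟨rfl⟩
instance : MeasurableSpace ABCD := ⊤

open ABCD

/-- The symbol (1 or 3) of the run encoded by a letter. -/
def sval : ABCD → ℕ
  | A => 1
  | B => 3
  | C => 1
  | D => 3

/-- The length (1 or 3) of the run encoded by a letter; this is also the value of `Δx`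
at the corresponding position. -/
def lval : ABCD → ℕ
  | A => 1
  | B => 1
  | C => 3
  | D => 3

/-- `y` is the recoding of `x`: the letter `y k` encodes the `k`-th run of `x`
(its symbol and its length). -/
def IsRecoding (x : ℤ → ℕ) (y : ℤ → ABCD) : Prop :=
  ∃ r : RunStructure x, ∀ k : ℤ,
    x (r.t k) = sval (y k) ∧ r.t (k + 1) - r.t k = (lval (y k) : ℤ)

/-- The recoding map `rec` (junk value when no recoding exists). -/
def recode (x : ℤ → ℕ) : ℤ → ABCD :=
  if h : ∃ y, IsRecoding x y then h.choose else fun _ => A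

/-- The set `Y = rec(X)` of recodings of smooth sequences. -/
def SmoothY : Set (ℤ → ABCD) := recode '' SmoothX

/-- The derivative operator induced on recodings: since `(Δx) i = lval (rec x i)`,
we have `Δ(rec x) = rec (Δ x) = recode (lval ∘ rec x)`. -/
def deltaY (y : ℤ → ABCD) : ℤ → ABCD := recode fun i => (lval (y i) : ℕ)

/-- `y` is well-aligned: the elementary block of `y` containing coordinate `0` starts
at position `0` (elementary blocks of `y` are exactly the runs of `Δx`, and
`(Δx) i = lval (y i)`). -/
def WellAligned (y : ℤ → ABCD) : Prop := lval (y (-1)) ≠ lval (y 0)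

/-- `B_Y^L`: the set of `y ∈ Y` such that `y, Δy, ..., Δ^{L-1} y` are all well-aligned. -/
def BY (L : ℕ) : Set (ℤ → ABCD) :=
  {y | y ∈ SmoothY ∧ ∀ l < L, WellAligned (deltaY^[l] y)}

/-- `Σ_y^L(n) = #{k ∈ [1,n] : S^k y ∈ B_Y^L}`. -/
def SigY (L : ℕ) (y : ℤ → ABCD) (n : ℕ) : ℕ :=
  ((Finset.Icc 1 n).filter fun k => shift^[k] y ∈ BY L).card

/-- `y` contains an elementary block in `{ABA, DCD}` (for `y ∈ Y`, any such factor is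
automatically an elementary block). -/
def HasType0 (y : ℤ → ABCD) : Prop :=
  ∃ i : ℤ, (y i = A ∧ y (i + 1) = B ∧ y (i + 2) = A) ∨
           (y i = D ∧ y (i + 1) = C ∧ y (i + 2) = D)

/-- `y` contains an elementary block in `{BAB, CDC}`. -/
def HasType1 (y : ℤ → ABCD) : Prop :=
  ∃ i : ℤ, (y i = B ∧ y (i + 1) = A ∧ y (i + 2) = B) ∨
           (y i = C ∧ y (i + 1) = D ∧ y (i + 2) = C)

/-- The type of a recoded sequence: `false` = type 0, `true` = type 1. -/
def typeOf (y : ℤ → ABCD) : Bool := decide (HasType1 y)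

/-- The sequence of types of the successive derivatives of a smooth sequence `x`. -/
def TypesX (x : ℤ → ℕ) : ℕ → Bool := fun n => typeOf (recode (delta^[n] x))

/-- The sequence of types of the successive derivatives of a recoded sequence `y`. -/
def TypesY (y : ℤ → ABCD) : ℕ → Bool := fun n => typeOf (deltaY^[n] y)

/-- `X_τ`: smooth bi-infinite sequences whose type sequence is exactly `τ`. -/
def Xset (τ : ℕ → Bool) : Set (ℤ → ℕ) := {x ∈ SmoothX | TypesX x = τ}

/-- `Y_τ = rec(X_τ)`. -/
def Yset (τ : ℕ → Bool) : Set (ℤ → ABCD) := recode '' Xset τ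

/-- A sequence over `{A,B,C,D}` is alternating: no two consecutive symbols in `{A,C}`
and no two consecutive symbols in `{B,D}`. -/
def Alternating (y : ℤ → ABCD) : Prop := ∀ n : ℤ, sval (y n) ≠ sval (y (n + 1))

/-- The substitutions `φ₀` and `φ₁` on letters. -/
def phiW : Bool → ABCD → List ABCD
  | false, A => [A]
  | false, B => [D]
  | false, C => [A, B, A]
  | false, D => [D, C, D]
  | true, A => [B]
  | true, B => [C]
  | true, C => [B, A, B]
  | true, D => [C, D, C]

/-- `z` is the image of the bi-infinite sequence `y` under the substitution `φ_t`, with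
the convention that the image of the letter at position `0` starts at position `0`. -/
def IsSubst (t : Bool) (y z : ℤ → ABCD) : Prop :=
  ∃ u : ℤ → ℤ, u 0 = 0 ∧
    (∀ k : ℤ, u (k + 1) = u k + (phiW t (y k)).length) ∧
    (∀ k : ℤ, ∀ j : Fin (phiW t (y k)).length, z (u k + (j : ℕ)) = (phiW t (y k)).get j)

/-- The substitution `φ_t` on bi-infinite sequences. -/
def substF (t : Bool) (y : ℤ → ABCD) : ℤ → ABCD :=
  if h : ∃ z, IsSubst t y z then h.choose else y

/-- The composition `φ_{τ₀} ∘ φ_{τ₁} ∘ ⋯ ∘ φ_{τ_{L-1}}`. -/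
def substComp (τ : ℕ → Bool) : ℕ → (ℤ → ABCD) → (ℤ → ABCD)
  | 0 => id
  | L + 1 => substF (τ 0) ∘ substComp (fun n => τ (n + 1)) L

/-- The homographies `h₀` and `h₁`. -/
def hmap : Bool → ℝ × ℝ → ℝ × ℝ
  | false, p => ((1 - p.1) / (3 - 2 * (p.1 + p.2)), (1 / 2 - p.1) / (3 - 2 * (p.1 + p.2)))
  | true, p => ((1 / 2 - p.1) / (3 - 2 * (p.1 + p.2)), (1 - p.1) / (3 - 2 * (p.1 + p.2)))

/-- The square `K = [0,1/2] × [0,1/2]`. -/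
def Ksq : Set (ℝ × ℝ) := Set.Icc (0 : ℝ) (1 / 2) ×ˢ Set.Icc (0 : ℝ) (1 / 2)

/-- The domain `E = {(a,b) ∈ K : a + b ≤ 3/4}`. -/
def Eset : Set (ℝ × ℝ) := {p ∈ Ksq | p.1 + p.2 ≤ 3 / 4}

/-- The composition `h_{t₀} ∘ h_{t₁} ∘ ⋯ ∘ h_{t_L}`. -/
def hComp (t : ℕ → Bool) : ℕ → (ℝ × ℝ → ℝ × ℝ)
  | 0 => hmap (t 0)
  | L + 1 => hComp t L ∘ hmap (t (L + 1))

/-- The point `(a(t), b(t))`, unique point of `⋂_L (h_{t₀} ∘ ⋯ ∘ h_{t_L})(E)`. -/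
def abPoint (t : ℕ → Bool) : ℝ × ℝ :=
  if h : ∃ p : ℝ × ℝ, (⋂ L : ℕ, hComp t L '' Eset) = {p} then h.choose else 0

/-- The number of occurrences of the letter `s` among positions `1, ..., m` of `z`. -/
def letterCount (s : ABCD) (z : ℤ → ABCD) (m : ℕ) : ℕ :=
  ((Finset.Icc 1 m).filter fun k => z (k : ℤ) = s).card

/-- `w` occurs as a factor of `y` at position `i`. -/
def IsFactorAt (w : List ABCD) (y : ℤ → ABCD) (i : ℤ) : Prop :=
  ∀ j : Fin w.length, y (i + (j : ℕ)) = w.get j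

/-- The cylinder set `[w]` in `{1,3}^ℤ`. -/
def cylX (w : List ℕ) : Set (ℤ → ℕ) :=
  {x | ∀ j : Fin w.length, x ((j : ℕ) : ℤ) = w.get j}

/-- The cylinder set `[w]` in `{A,B,C,D}^ℤ`. -/
def cylY (w : List ABCD) : Set (ℤ → ABCD) :=
  {y | ∀ j : Fin w.length, y ((j : ℕ) : ℤ) = w.get j}

/-- The number of occurrences of the finite word `w` in the prefix `x₀ ⋯ x_{n-1}`. -/
def occCount (x : ℤ → ℕ) (w : List ℕ) (n : ℕ) : ℕ :=
  ((Finset.range n).filter fun i =>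
    i + w.length ≤ n ∧ ∀ j : Fin w.length, x (((i + (j : ℕ) : ℕ)) : ℤ) = w.get j).card

/-- A subshift `Z` is minimal if it contains no nonempty proper closed shift-invariant
subset. -/
def ShiftMinimal {α : Type*} [TopologicalSpace α] (Z : Set (ℤ → α)) : Prop :=
  ∀ W : Set (ℤ → α), W ⊆ Z → W.Nonempty → IsClosed W → shift '' W = W → W = Z

/-!
Cut a smooth sequence `x` into the blocks of level `m`, the stretches of `x` coded by single
letters of `Δᵐ x`. Each of them is a palindrome: a block of level `m + 1` consists of the runs
of `x` indexed by a block of level `m` of `Δ x`, which is a palindrome of odd length, so these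
runs mirror each other and the first and last carry the same symbol. Blocks of level `m` have
length at most `3ᵐ`, and since `Δ x` has no four consecutive `1`s, any `4ᵐ` consecutive ones
cover at least `6ᵐ` positions. Reflecting an occurrence of `w` inside its block yields an
occurrence of the reversed word, so among the positions `0, …, n - 1` the two words occur equally
often up to `O(3ᵐ) + |w| (2/3)ᵐ n`. Integrating against the shift-invariant measure, dividing by
`n` and letting first `n`, then `m` tend to infinity gives `μ [w] ≤ μ [w⃖]`, and by symmetry
equality.
-/

section IntegerSequences

variable {f : ℤ → ℤ}

lemma add_mul_le_of_add_le {a b : ℤ} (h : ∀ p, f p + a ≤ f (p + b)) (p : ℤ) :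
    ∀ s : ℕ, f p + a * s ≤ f (p + b * s)
  | 0 => by simp
  | s + 1 => by
    have hs := add_mul_le_of_add_le h p s
    have hstep := h (p + b * s)
    push_cast
    rw [show p + b * (s + 1) = p + b * s + b by ring]
    linarith

lemma le_add_mul_of_le_add {a : ℤ} (h : ∀ p, f (p + 1) ≤ f p + a) (p : ℤ) :
    ∀ s : ℕ, f (p + s) ≤ f p + a * s
  | 0 => by simp
  | s + 1 => by
    have hs := le_add_mul_of_le_add h p s
    have hstep := h (p + s)
    push_cast
    rw [← add_assoc]
    linarith

lemma StrictMono.add_le_apply_add (hf : StrictMono f) (p : ℤ) (s : ℕ) : f p + s ≤ f (p + s) := by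
  simpa using add_mul_le_of_add_le (a := 1) (b := 1) (fun p => hf (lt_add_one p)) p s

lemma StrictMono.exists_apply_le_lt_apply_add_one (hf : StrictMono f) (p : ℤ) :
    ∃ k, f k ≤ p ∧ p < f (k + 1) := by
  have hbdd : ∃ b, ∀ k, f k ≤ p → k ≤ b := by
    refine ⟨max 0 (p - f 0), fun k hk => ?_⟩
    rcases le_or_gt k 0 with h | h
    · exact h.trans (le_max_left _ _)
    · have := hf.add_le_apply_add 0 k.toNat
      rw [Int.toNat_of_nonneg h.le, zero_add] at this
      omega
  have hne : ∃ k, f k ≤ p := by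
    refine ⟨-(f 0 - p).toNat, ?_⟩
    have := hf.add_le_apply_add (-(f 0 - p).toNat) (f 0 - p).toNat
    rw [neg_add_cancel] at this
    omega
  obtain ⟨k, hk, hmax⟩ := Int.exists_greatest_of_bdd hbdd hne
  exact ⟨k, hk, not_le.mp fun h => by have := hmax _ h; omega⟩

lemma StrictMono.eq_of_apply_le_lt_apply_add_one (hf : StrictMono f) {p k k' : ℤ}
    (hk : f k ≤ p) (hk' : p < f (k + 1)) (hl : f k' ≤ p) (hl' : p < f (k' + 1)) : k = k' := by
  by_contra hne
  rcases lt_or_gt_of_ne hne with h | h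
  · have := hf.monotone (show k + 1 ≤ k' by omega)
    omega
  · have := hf.monotone (show k' + 1 ≤ k by omega)
    omega

lemma odd_sub_of_odd_sub_add_one (h : ∀ k, Odd (f (k + 1) - f k)) {lo hi : ℤ} (hle : lo ≤ hi)
    (hodd : Odd (hi - lo)) : Odd (f hi - f lo) := by
  suffices Even (f hi - f lo - (hi - lo)) by
    have := this.add_odd hodd
    simpa using this
  clear hodd
  induction hi, hle using Int.leInduction with
  | base => simp
  | succ hi _ ih =>
    rw [show f (hi + 1) - f lo - (hi + 1 - lo)
        = (f hi - f lo - (hi - lo)) + (f (hi + 1) - f hi - 1) by ring]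
    exact ih.add ((h hi).sub_odd odd_one)

def IsPalindromicOn {α : Type*} (x : ℤ → α) (a b : ℤ) : Prop :=
  ∀ i, a ≤ i → i < b → x i = x (a + b - 1 - i)

lemma add_apply_sub_eq_of_isPalindromicOn {lo hi : ℤ}
    (h : IsPalindromicOn (fun k => f (k + 1) - f k) lo hi) {q : ℤ} (hlo : lo ≤ q) (hhi : q ≤ hi) :
    f q + f (lo + hi - q) = f lo + f hi := by
  induction q, hlo using Int.leInduction with
  | base => simp
  | succ q hq ih =>
    have hpal := h q hq (by omega)
    simp only [show lo + hi - 1 - q + 1 = lo + hi - q by ring] at hpal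
    rw [show lo + hi - (q + 1) = lo + hi - 1 - q by ring]
    have := ih (by omega)
    linarith

end IntegerSequences

namespace RunStructure

variable {x : ℤ → ℕ} (r : RunStructure x)

lemma apply_add_two (hx : ∀ n, x n = 1 ∨ x n = 3) (k : ℤ) : x (r.t (k + 2)) = x (r.t k) := by
  have h₁ := r.alt k
  have h₂ := r.alt (k + 1)
  rw [show k + 1 + 1 = k + 2 by ring] at h₂
  rcases hx (r.t k) with h | h <;> rcases hx (r.t (k + 1)) with h' | h' <;>
    rcases hx (r.t (k + 2)) with h'' | h'' <;> omega

lemma apply_add_two_mul (hx : ∀ n, x n = 1 ∨ x n = 3) (k e : ℤ) :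
    x (r.t (k + 2 * e)) = x (r.t k) := by
  induction e using Int.induction_on with
  | zero => simp
  | succ e ih => rw [show k + 2 * (e + 1 : ℤ) = k + 2 * e + 2 by ring, r.apply_add_two hx, ih]
  | pred e ih =>
    rw [← ih, show k + 2 * (-e : ℤ) = k + 2 * (-e - 1) + 2 by ring, r.apply_add_two hx]

/-- Runs an even number of indices apart carry the same symbol; as `hi - lo` is odd, so do a run
and its mirror image. -/
lemma isPalindromicOn (hx : ∀ n, x n = 1 ∨ x n = 3) {lo hi : ℤ} (hodd : Odd (hi - lo))
    (hpal : IsPalindromicOn (fun k => r.t (k + 1) - r.t k) lo hi) :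
    IsPalindromicOn x (r.t lo) (r.t hi) := by
  intro i hlo hhi
  obtain ⟨q, hq, hq'⟩ := r.mono.exists_apply_le_lt_apply_add_one i
  have hloq : lo ≤ q := Int.lt_add_one_iff.mp (r.mono.lt_iff_lt.mp (by omega))
  have hqhi : q < hi := r.mono.lt_iff_lt.mp (by omega)
  have e₁ := add_apply_sub_eq_of_isPalindromicOn hpal hloq hqhi.le
  have e₂ := add_apply_sub_eq_of_isPalindromicOn hpal (show lo ≤ q + 1 by omega) hqhi
  rw [show lo + hi - (q + 1) = lo + hi - 1 - q by ring] at e₂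
  rw [show lo + hi - q = lo + hi - 1 - q + 1 by ring] at e₁
  obtain ⟨c, hc⟩ := hodd
  rw [r.const q i hq hq',
    r.const (lo + hi - 1 - q) (r.t lo + r.t hi - 1 - i) (by omega) (by omega),
    show lo + hi - 1 - q = q + 2 * (c - (q - lo)) by omega, r.apply_add_two_mul hx]

end RunStructure

namespace SmoothSeq

variable {x : ℤ → ℕ}

lemma eq_one_or_three (hx : SmoothSeq x) (n : ℤ) : x n = 1 ∨ x n = 3 := hx 0 n

lemma delta_eq_one_or_three (hx : SmoothSeq x) (n : ℤ) : delta x n = 1 ∨ delta x n = 3 := hx 1 n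

lemma smoothSeq_delta (hx : SmoothSeq x) : SmoothSeq (delta x) := fun k n => by
  simpa only [← Function.iterate_succ_apply] using hx (k + 1) n

lemma exists_runStructure (hx : SmoothSeq x) :
    ∃ r : RunStructure x, ∀ k, (delta x k : ℤ) = r.t (k + 1) - r.t k := by
  have hex : ∃ d, IsDelta x d := by
    by_contra hne
    have := hx.delta_eq_one_or_three 0
    simp [delta, dif_neg hne] at this
  have : IsDelta x (delta x) := by
    rw [delta, dif_pos hex]
    exact hex.choose_spec
  exact this

lemma ne_of_apply_add_one_eq_of_apply_add_two_eq (hx : SmoothSeq x) (j : ℤ)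
    (h₁ : x (j + 1) = x j) (h₂ : x (j + 2) = x j) : x (j + 3) ≠ x j := by
  intro h₃
  obtain ⟨r, hr⟩ := hx.exists_runStructure
  obtain ⟨k, hk, hk'⟩ := r.mono.exists_apply_le_lt_apply_add_one j
  have hne : x (r.t (k + 1)) ≠ x (r.t (k + 1) - 1) := by
    rw [r.const k (r.t (k + 1) - 1) (by omega) (by omega)]
    exact r.alt k
  have hlen := hr k
  have : r.t (k + 1) = j + 1 ∨ r.t (k + 1) = j + 2 ∨ r.t (k + 1) = j + 3 := by
    rcases hx.delta_eq_one_or_three k with h | h <;> omega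
  rcases this with e | e | e <;> rw [e] at hne
  · rw [add_sub_cancel_right, h₁] at hne
    exact hne rfl
  · rw [show j + 2 - 1 = j + 1 by ring, h₁, h₂] at hne
    exact hne rfl
  · rw [show j + 3 - 1 = j + 2 by ring, h₂, h₃] at hne
    exact hne rfl

lemma add_six_le (hx : SmoothSeq x) (r : RunStructure x)
    (hr : ∀ k, (delta x k : ℤ) = r.t (k + 1) - r.t k) (p : ℤ) : r.t p + 6 ≤ r.t (p + 4) := by
  have h₀ := hr p
  have h₁ := hr (p + 1)
  have h₂ := hr (p + 2)
  have h₃ := hr (p + 3)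
  rw [show p + 1 + 1 = p + 2 by ring] at h₁
  rw [show p + 2 + 1 = p + 3 by ring] at h₂
  rw [show p + 3 + 1 = p + 4 by ring] at h₃
  have hd := hx.smoothSeq_delta.ne_of_apply_add_one_eq_of_apply_add_two_eq p
  rcases hx.delta_eq_one_or_three p with e₀ | e₀ <;>
    rcases hx.delta_eq_one_or_three (p + 1) with e₁ | e₁ <;>
    rcases hx.delta_eq_one_or_three (p + 2) with e₂ | e₂ <;>
    rcases hx.delta_eq_one_or_three (p + 3) with e₃ | e₃ <;>
    simp only [e₀, e₁, e₂, e₃, Nat.cast_one, Nat.cast_ofNat, true_implies, ne_eq,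
      not_true_eq_false] at h₀ h₁ h₂ h₃ hd <;> omega

end SmoothSeq

structure PalindromicBlocks {α : Type*} (x : ℤ → α) (g c q : ℤ) where
  start : ℤ → ℤ
  strictMono : StrictMono start
  isPalindromicOn : ∀ k, IsPalindromicOn x (start k) (start (k + 1))
  le_add : ∀ k, start (k + 1) ≤ start k + g
  add_mul_le : ∀ p (s : ℕ), start p + c * s ≤ start (p + q * s)

lemma SmoothSeq.exists_palindromicBlocks_succ {x : ℤ → ℕ} (hx : SmoothSeq x) {m : ℕ}
    (P : PalindromicBlocks (delta x) (3 ^ m) (6 ^ m) (4 ^ m))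
    (hP : ∀ k, Odd (P.start (k + 1) - P.start k)) :
    ∃ P' : PalindromicBlocks x (3 ^ (m + 1)) (6 ^ (m + 1)) (4 ^ (m + 1)),
      ∀ k, Odd (P'.start (k + 1) - P'.start k) := by
  obtain ⟨r, hr⟩ := hx.exists_runStructure
  have hgap (k : ℤ) : r.t (k + 1) ≤ r.t k + 3 := by
    rcases hx.delta_eq_one_or_three k with h | h <;> have := hr k <;> rw [h] at this <;> omega
  have hodd (k : ℤ) : Odd (r.t (k + 1) - r.t k) := by
    rcases hx.delta_eq_one_or_three k with h | h <;> rw [← hr k, h] <;> decide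
  refine ⟨⟨r.t ∘ P.start, r.mono.comp P.strictMono, fun k => ?_, fun k => ?_, fun p s => ?_⟩,
    fun k => odd_sub_of_odd_sub_add_one hodd (P.strictMono.monotone (by omega)) (hP k)⟩
  · refine r.isPalindromicOn hx.eq_one_or_three (hP k) fun i hi hi' => ?_
    simp only [← hr]
    exact_mod_cast P.isPalindromicOn k i hi hi'
  · calc r.t (P.start (k + 1)) ≤ r.t (P.start k + ((3 ^ m : ℕ) : ℤ)) := by
          push_cast
          exact r.mono.monotone (P.le_add k)
      _ ≤ r.t (P.start k) + 3 * ((3 ^ m : ℕ) : ℤ) := le_add_mul_of_le_add hgap _ _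
      _ = r.t (P.start k) + 3 ^ (m + 1) := by push_cast; ring
  · calc r.t (P.start p) + 6 ^ (m + 1) * s = r.t (P.start p) + 6 * ((6 ^ m * s : ℕ) : ℤ) := by
          push_cast; ring
      _ ≤ r.t (P.start p + 4 * ((6 ^ m * s : ℕ) : ℤ)) :=
          add_mul_le_of_add_le (hx.add_six_le r hr) _ _
      _ ≤ r.t (P.start (p + 4 ^ m * ((4 * s : ℕ) : ℤ))) := by
          apply r.mono.monotone
          have := P.add_mul_le p (4 * s)
          push_cast at this ⊢
          linarith
      _ = r.t (P.start (p + 4 ^ (m + 1) * s)) := by push_cast; ring_nf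

theorem SmoothSeq.exists_palindromicBlocks (m : ℕ) :
    ∀ {x : ℤ → ℕ}, SmoothSeq x →
      ∃ P : PalindromicBlocks x (3 ^ m) (6 ^ m) (4 ^ m),
        ∀ k, Odd (P.start (k + 1) - P.start k) := by
  induction m with
  | zero =>
    intro x _
    refine ⟨⟨id, strictMono_id, fun k i hi hi' => ?_, fun k => by simp, fun p s => by simp⟩,
      fun k => by simp⟩
    simp only [id] at hi hi' ⊢
    congr 1
    omega
  | succ m ih =>
    intro x hx
    obtain ⟨P, hP⟩ := ih hx.smoothSeq_delta
    exact hx.exists_palindromicBlocks_succ P hP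

section Occurrences

variable {α : Type*}

def OccursAt (w : List α) (x : ℤ → α) (i : ℤ) : Prop :=
  ∀ j : Fin w.length, x (i + j) = w.get j

def occurrences (w : List α) (x : ℤ → α) (n : ℕ) : Finset ℤ :=
  (Finset.Ico 0 (n : ℤ)).filter (OccursAt w x)

lemma OccursAt.reverse_of_isPalindromicOn {w : List α} {x : ℤ → α} {i a b : ℤ}
    (h : OccursAt w x i) (hpal : IsPalindromicOn x a b) (ha : a ≤ i) (hb : i + w.length ≤ b) :
    OccursAt w.reverse x (a + b - w.length - i) := by
  intro j
  have hj : (j : ℕ) < w.length := by simpa using j.isLt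
  rw [hpal _ (by omega) (by omega),
    show a + b - 1 - (a + b - w.length - i + j) = i + ((w.length - 1 - j : ℕ) : ℤ) by omega,
    h ⟨w.length - 1 - j, by omega⟩]
  simp [List.getElem_reverse]

end Occurrences

namespace PalindromicBlocks

variable {α : Type*} {x : ℤ → α} {g c q : ℤ} (P : PalindromicBlocks x g c q)

def index (i : ℤ) : ℤ := (P.strictMono.exists_apply_le_lt_apply_add_one i).choose

lemma start_index_le (i : ℤ) : P.start (P.index i) ≤ i :=
  (P.strictMono.exists_apply_le_lt_apply_add_one i).choose_spec.1

lemma lt_start_index_add_one (i : ℤ) : i < P.start (P.index i + 1) :=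
  (P.strictMono.exists_apply_le_lt_apply_add_one i).choose_spec.2

lemma index_eq {i k : ℤ} (hk : P.start k ≤ i) (hk' : i < P.start (k + 1)) : P.index i = k :=
  P.strictMono.eq_of_apply_le_lt_apply_add_one (P.start_index_le i) (P.lt_start_index_add_one i)
    hk hk'

lemma le_index {i k : ℤ} (h : P.start k ≤ i) : k ≤ P.index i :=
  Int.lt_add_one_iff.mp <| P.strictMono.lt_iff_lt.mp <| h.trans_lt (P.lt_start_index_add_one i)

lemma index_lt {i k : ℤ} (h : i < P.start k) : P.index i < k :=
  P.strictMono.lt_iff_lt.mp <| (P.start_index_le i).trans_lt h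

def InnerWindow (a b : ℤ) (l : ℕ) (i : ℤ) : Prop :=
  a < P.index i ∧ P.index i < b ∧ i + l ≤ P.start (P.index i + 1)

def reflect (l : ℕ) (i : ℤ) : ℤ := P.start (P.index i) + P.start (P.index i + 1) - l - i

variable {w : List α} {n : ℕ} {a b : ℤ}

lemma index_reflect {i : ℤ} (hl : 0 < w.length) (hi : P.InnerWindow a b w.length i) :
    P.index (P.reflect w.length i) = P.index i := by
  have := P.start_index_le i
  have := hi.2.2
  exact P.index_eq (by unfold reflect; omega) (by unfold reflect; omega)

lemma card_filter_innerWindow_le (hw : w ≠ []) (ha : 0 < P.start (a + 1))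
    (hb : P.start b ≤ n) :
    ((occurrences w x n).filter (P.InnerWindow a b w.length)).card ≤
      (occurrences w.reverse x n).card := by
  have hl : 0 < w.length := List.length_pos_iff.mpr hw
  refine Finset.card_le_card_of_injOn (P.reflect w.length) (fun i hi => ?_)
    (fun i hi i' hi' heq => ?_)
  · rw [Finset.mem_coe, Finset.mem_filter, occurrences, Finset.mem_filter, Finset.mem_Ico] at hi
    obtain ⟨⟨_, hocc⟩, hin⟩ := hi
    have := P.start_index_le i
    have := hin.2.2
    have := P.strictMono.monotone (Int.add_one_le_iff.mpr hin.1)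
    have := P.strictMono.monotone (Int.add_one_le_iff.mpr hin.2.1)
    rw [Finset.mem_coe, occurrences, Finset.mem_filter, Finset.mem_Ico]
    exact ⟨by unfold reflect; omega,
      hocc.reverse_of_isPalindromicOn (P.isPalindromicOn _) (P.start_index_le i) hin.2.2⟩
  · rw [Finset.mem_coe, Finset.mem_filter] at hi hi'
    have : P.index i = P.index i' := by
      rw [← P.index_reflect hl hi.2, ← P.index_reflect hl hi'.2, heq]
    unfold reflect at heq
    rw [this] at heq
    omega

lemma filter_not_innerWindow_subset (ha : P.start a ≤ 0) (hb : n < P.start (b + 1)) :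
    (occurrences w x n).filter (¬ P.InnerWindow a b w.length ·) ⊆
      Finset.Ico 0 g ∪ Finset.Ico (n - g) n ∪ (Finset.Ioo a b).biUnion
        fun k => Finset.Ico (P.start (k + 1) - w.length) (P.start (k + 1)) := by
  intro i hi
  rw [Finset.mem_filter, occurrences, Finset.mem_filter, Finset.mem_Ico] at hi
  obtain ⟨⟨⟨h₀, hn⟩, _⟩, hout⟩ := hi
  have hk := P.start_index_le i
  have hk' := P.lt_start_index_add_one i
  have hak := P.le_index (ha.trans h₀)
  have hkb := Int.lt_add_one_iff.mp (P.index_lt (hn.trans hb))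
  simp only [Finset.mem_union, Finset.mem_Ico, Finset.mem_biUnion, Finset.mem_Ioo]
  rcases hak.eq_or_lt with hak | hak
  · have := P.le_add a
    rw [hak] at ha this
    omega
  rcases hkb.eq_or_lt with hkb | hkb
  · have := P.le_add b
    rw [hkb] at hk
    omega
  refine Or.inr ⟨P.index i, ⟨hak, hkb⟩, ?_, hk'⟩
  by_contra h
  exact hout ⟨hak, hkb, by omega⟩

lemma card_filter_not_innerWindow_le (ha : P.start a ≤ 0) (hb : n < P.start (b + 1)) :
    (((occurrences w x n).filter (¬ P.InnerWindow a b w.length ·)).card : ℤ) ≤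
      2 * g + (b - a) * w.length := by
  have hg : 0 ≤ g := by
    have := P.le_add 0
    have := P.strictMono (lt_add_one (0 : ℤ))
    omega
  have hcard := (Finset.card_le_card (P.filter_not_innerWindow_subset (w := w) ha hb)).trans <|
    (Finset.card_union_le _ _).trans <|
      add_le_add (Finset.card_union_le _ _) Finset.card_biUnion_le
  simp only [Int.card_Ico, sub_zero, sub_sub_cancel, Int.toNat_natCast, Finset.sum_const,
    Int.card_Ioo, smul_eq_mul] at hcard
  have : a < b + 1 := P.strictMono.lt_iff_lt.mp (by omega)
  have hba : (((b - a - 1).toNat : ℕ) : ℤ) * w.length ≤ (b - a) * w.length :=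
    mul_le_mul_of_nonneg_right (by omega) (by positivity)
  have hcard' := (Nat.cast_le (α := ℤ)).mpr hcard
  push_cast at hcard'
  omega

lemma mul_sub_le (hc : 0 ≤ c) (hq : 0 < q) (ha : 0 < P.start (a + 1)) (hb : P.start b ≤ n)
    (hab : a ≤ b) : c * (b - a) ≤ q * (n + g + c) := by
  set s := (b - a) / q
  have hs : 0 ≤ s := Int.ediv_nonneg (by omega) hq.le
  have hqs : s * q ≤ b - a := Int.ediv_mul_le _ hq.ne'
  have hspread := P.add_mul_le a s.toNat
  rw [Int.toNat_of_nonneg hs] at hspread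
  have := P.strictMono.monotone (show a + q * s ≤ b by linarith)
  have := P.le_add a
  have hcs : c * s ≤ n + g := by linarith
  calc c * (b - a) ≤ c * ((s + 1) * q) :=
        mul_le_mul_of_nonneg_left (Int.lt_ediv_add_one_mul_self _ hq).le hc
    _ = q * (c * s + c) := by ring
    _ ≤ q * (n + g + c) := mul_le_mul_of_nonneg_left (by linarith) hq.le

theorem card_occurrences_le (P : PalindromicBlocks x g c q) (hw : w ≠ []) (hc : 0 ≤ c)
    (hq : 0 < q) (n : ℕ) :
    c * (occurrences w x n).card ≤
      c * ((occurrences w.reverse x n).card + 2 * g) + q * w.length * (n + g + c) := by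
  have ha := P.start_index_le 0
  have ha' := P.lt_start_index_add_one 0
  have hb' := P.lt_start_index_add_one n
  have hab := P.le_index ((P.start_index_le 0).trans (Nat.cast_nonneg n))
  have hsplit := Finset.card_filter_add_card_filter_not (s := occurrences w x n)
    (P.InnerWindow (P.index 0) (P.index n) w.length)
  have hinner := P.card_filter_innerWindow_le hw ha' (P.start_index_le n)
  have houter := P.card_filter_not_innerWindow_le (w := w) ha hb'
  have hblocks := mul_le_mul_of_nonneg_right
    (P.mul_sub_le hc hq ha' (P.start_index_le n) hab) (show (0 : ℤ) ≤ w.length by positivity)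
  have hinner' : c * (_ : ℤ) ≤ c * _ := mul_le_mul_of_nonneg_left (Int.ofNat_le.mpr hinner) hc
  have houter' := mul_le_mul_of_nonneg_left houter hc
  rw [← hsplit]
  push_cast
  linarith

end PalindromicBlocks

theorem SmoothSeq.card_occurrences_le {x : ℤ → ℕ} (hx : SmoothSeq x) {w : List ℕ} (hw : w ≠ [])
    (K n : ℕ) :
    ((occurrences w x n).card : ℝ) ≤ (occurrences w.reverse x n).card +
      ((2 * 3 ^ K + w.length * (2 / 3) ^ K * (3 ^ K + 6 ^ K)) + n * (w.length * (2 / 3) ^ K)) := by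
  obtain ⟨P, -⟩ := hx.exists_palindromicBlocks K
  have h := P.card_occurrences_le hw (by positivity) (by positivity) n
  have h' : (6 : ℝ) ^ K * (occurrences w x n).card ≤
      6 ^ K * ((occurrences w.reverse x n).card + 2 * 3 ^ K) +
        (2 / 3) ^ K * 6 ^ K * w.length * (n + 3 ^ K + 6 ^ K) := by
    rw [← mul_pow, show (2 / 3 : ℝ) * 6 = 4 by norm_num]
    exact_mod_cast h
  have h6 : (0 : ℝ) < 6 ^ K := by positivity
  rw [← mul_le_mul_iff_of_pos_left h6]
  linarith

section Measure

variable {μ : Measure (ℤ → ℕ)}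

lemma measurableSet_occursAt {α : Type*} [MeasurableSpace α] [MeasurableSingletonClass α]
    (w : List α) (i : ℤ) : MeasurableSet {x : ℤ → α | OccursAt w x i} := by
  simp only [OccursAt, Set.ofPred_forall]
  exact MeasurableSet.iInter fun j => measurable_pi_apply _ (measurableSet_singleton _)

lemma card_occurrences_eq_sum_indicator {α : Type*} (w : List α) (x : ℤ → α) (n : ℕ) :
    ((occurrences w x n).card : ℝ) =
      ∑ i ∈ Finset.Ico (0 : ℤ) n, {y | OccursAt w y i}.indicator 1 x := by
  rw [occurrences, Finset.natCast_card_filter]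
  rfl

lemma integrable_card_occurrences [IsFiniteMeasure μ] (w : List ℕ) (n : ℕ) :
    Integrable (fun x => ((occurrences w x n).card : ℝ)) μ := by
  simp only [card_occurrences_eq_sum_indicator]
  exact integrable_finsetSum _ fun i _ =>
    (integrable_const 1).indicator (measurableSet_occursAt w i)

lemma shift_iterate_apply {α : Type*} (m : ℕ) (x : ℤ → α) (i : ℤ) :
    shift^[m] x i = x (i + m) := by
  induction m generalizing x with
  | zero => simp
  | succ m ih =>
    rw [Function.iterate_succ_apply, ih, shift]
    push_cast
    ring_nf

lemma measure_occursAt (hinv : MeasurePreserving shift μ μ) (w : List ℕ) (m : ℕ) :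
    μ {x | OccursAt w x m} = μ (cylX w) := by
  have hcyl : cylX w = {x | OccursAt w x 0} := by simp [cylX, OccursAt]
  have hpre : shift^[m] ⁻¹' cylX w = {x | OccursAt w x m} := by
    ext x
    simp [hcyl, OccursAt, shift_iterate_apply, add_comm]
  rw [← hpre]
  exact (hinv.iterate m).measure_preimage
    (hcyl ▸ measurableSet_occursAt w 0).nullMeasurableSet

lemma integral_card_occurrences [IsFiniteMeasure μ] (hinv : MeasurePreserving shift μ μ)
    (w : List ℕ) (n : ℕ) :
    ∫ x, ((occurrences w x n).card : ℝ) ∂μ = n * μ.real (cylX w) := by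
  simp only [card_occurrences_eq_sum_indicator]
  rw [integral_finsetSum _ fun i _ => (integrable_const 1).indicator (measurableSet_occursAt w i)]
  have hterm : ∀ i ∈ Finset.Ico (0 : ℤ) n,
      ∫ x, {y | OccursAt w y i}.indicator (1 : (ℤ → ℕ) → ℝ) x ∂μ = μ.real (cylX w) := by
    intro i hi
    rw [integral_indicator_one (measurableSet_occursAt w i), measureReal_def, measureReal_def,
      ← Int.toNat_of_nonneg (Finset.mem_Ico.mp hi).1, measure_occursAt hinv]
  rw [Finset.sum_congr rfl hterm, Finset.sum_const, Int.card_Ico, nsmul_eq_mul]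
  simp

lemma nat_mul_measureReal_le [IsProbabilityMeasure μ] (hinv : MeasurePreserving shift μ μ)
    {s : Set (ℤ → ℕ)} (hs : μ s = 1) {w v : List ℕ} {n : ℕ} {C : ℝ}
    (h : ∀ x ∈ s, ((occurrences w x n).card : ℝ) ≤ (occurrences v x n).card + C) :
    n * μ.real (cylX w) ≤ n * μ.real (cylX v) + C := by
  have hmeas : MeasurableSet
      {x | ((occurrences w x n).card : ℝ) ≤ (occurrences v x n).card + C} := by
    simp only [card_occurrences_eq_sum_indicator]
    refine measurableSet_le ?_ (Measurable.add_const ?_ C) <;>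
      exact Finset.measurable_sum _ fun i _ =>
        measurable_const.indicator (measurableSet_occursAt _ i)
  have hae : ∀ᵐ x ∂μ, ((occurrences w x n).card : ℝ) ≤ (occurrences v x n).card + C := by
    rw [ae_iff_measure_eq hmeas.nullMeasurableSet, measure_univ]
    exact le_antisymm prob_le_one (hs ▸ measure_mono h)
  have := integral_mono_ae (integrable_card_occurrences w n)
    ((integrable_card_occurrences v n).add (integrable_const C)) hae
  simp only [Pi.add_apply] at this
  rwa [integral_add (integrable_card_occurrences v n) (integrable_const C), integral_const,
    integral_card_occurrences hinv, integral_card_occurrences hinv, probReal_univ,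
    one_smul] at this

end Measure

lemma le_add_of_forall_nat_mul_le_add {a b c ε : ℝ} (h : ∀ n : ℕ, n * a ≤ n * b + (c + n * ε)) :
    a ≤ b + ε := by
  by_contra! hlt
  obtain ⟨n, hn⟩ := exists_nat_gt (c / (a - b - ε))
  rw [div_lt_iff₀ (by linarith)] at hn
  linarith [h n]

lemma measureReal_cylX_le_reverse {μ : Measure (ℤ → ℕ)} [IsProbabilityMeasure μ]
    (hinv : MeasurePreserving shift μ μ) {s : Set (ℤ → ℕ)} (hs : μ s = 1)
    (hsmooth : ∀ x ∈ s, SmoothSeq x) {w : List ℕ} (hw : w ≠ []) :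
    μ.real (cylX w) ≤ μ.real (cylX w.reverse) := by
  have hK (K : ℕ) : μ.real (cylX w) ≤ μ.real (cylX w.reverse) + w.length * (2 / 3) ^ K :=
    le_add_of_forall_nat_mul_le_add fun n =>
      nat_mul_measureReal_le hinv hs fun x hx => (hsmooth x hx).card_occurrences_le hw K n
  have hlim : Tendsto (fun K : ℕ => μ.real (cylX w.reverse) + w.length * (2 / 3 : ℝ) ^ K) atTop
      (𝓝 (μ.real (cylX w.reverse))) := by
    simpa using tendsto_const_nhds.add
      ((tendsto_pow_atTop_nhds_zero_of_lt_one (by norm_num) (by norm_num)).const_mul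
        (w.length : ℝ))
  exact ge_of_tendsto' hlim hK

theorem stmt16_general (τ : ℕ → Bool) (μ : Measure (ℤ → ℕ))
    (hμ : IsProbabilityMeasure μ) (hsupp : μ (Xset τ) = 1)
    (hinv : MeasurePreserving shift μ μ)
    (w : List ℕ) :
    μ (cylX w.reverse) = μ (cylX w) := by
  rcases eq_or_ne w [] with rfl | hw
  · rfl
  have hsmooth : ∀ x ∈ Xset τ, SmoothSeq x := fun x hx => hx.1
  have h₁ := measureReal_cylX_le_reverse hinv hsupp hsmooth hw
  have h₂ := measureReal_cylX_le_reverse hinv hsupp hsmooth (List.reverse_ne_nil_iff.mpr hw)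
  rw [List.reverse_reverse] at h₂
  exact (ENNReal.toReal_eq_toReal_iff' (measure_ne_top _ _) (measure_ne_top _ _)).mp
    (le_antisymm h₂ h₁)

/-- Reversal invariance of `μ_τ`.
For every `τ` and every finite word `w` over `{1,3}`, the unique `S`-invariant
probability measure on `X_τ` satisfies `μ_τ([reverse w]) = μ_τ([w])`. -/
theorem stmt16 (τ : ℕ → Bool) (μ : Measure (ℤ → ℕ))
    (hμ : IsProbabilityMeasure μ) (hsupp : μ (Xset τ) = 1)
    (hinv : MeasurePreserving shift μ μ)
    (w : List ℕ) (hw : ∀ c ∈ w, c = 1 ∨ c = 3) :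
    μ (cylX w.reverse) = μ (cylX w) :=
  stmt16_general τ μ hμ hsupp hinv w
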